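/- In the category of finite directed multigraphs, given composable injective graph morphisms i : K → I and m : I → X, the final pullback complement of (m, i) exists and its apex is the subgraph K̄ of X with vertex set V_X \ m[V_I \ V_K] and edge set consisting of those edges of E_X \ m[E_I \ E_K] whose source and target both lie in V_{K̄}. -/
import Mathlib


open CategoryTheory

/-- A directed multigraph. -/
structure MGraph where
  V : Type
  E : Type
  src : E → V
  trg : E → V

/-- A morphism of directed multigraphs. -/
@[ext]
structure MGraphHom (G H : MGraph) where
  onV : G.V → H.V
  onE : G.E → H.E
  src_comm : ∀ e, H.src (onE e) = onV (G.src e)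
  trg_comm : ∀ e, H.trg (onE e) = onV (G.trg e)

instance : Category MGraph where
  Hom := MGraphHom
  id G := ⟨id, id, fun _ => rfl, fun _ => rfl⟩
  comp f g := ⟨g.onV ∘ f.onV, g.onE ∘ f.onE,
    fun e => by simp [g.src_comm, f.src_comm],
    fun e => by simp [g.trg_comm, f.trg_comm]⟩

/-- final pullback complement in a category -/
structure IsFPC {C : Type*} [Category C] {P I K X : C}
    (a : P ⟶ I) (b : P ⟶ K) (c : I ⟶ X) (d : K ⟶ X) : Prop where
  isPullback : IsPullback a b c d
  univ : ∀ {Q L : C} (x : Q ⟶ I) (y : Q ⟶ L) (z : L ⟶ X) (w : Q ⟶ P),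
    IsPullback x y c z → w ≫ a = x →
    ∃! w' : L ⟶ K, w' ≫ d = z ∧ y ≫ w' = w ≫ b

variable {K I X : MGraph}

/-- vertices of `X` that are images of vertices of `I` not coming from `K`. -/
def badV (i : K ⟶ I) (m : I ⟶ X) : Set X.V :=
  m.onV '' {w | w ∉ Set.range i.onV}

/-- edges of `X` that are images of edges of `I` not coming from `K`. -/
def badE (i : K ⟶ I) (m : I ⟶ X) : Set X.E :=
  m.onE '' {w | w ∉ Set.range i.onE}

/-- The final pullback complement object `K̄`: vertex set `V_X ∖ m[V_I ∖ V_K]`, edge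
set the edges in `E_X ∖ m[E_I ∖ E_K]` whose source and target are in `V_K̄`. -/
def Kbar (i : K ⟶ I) (m : I ⟶ X) : MGraph where
  V := {v : X.V // v ∉ badV i m}
  E := {e : X.E // e ∉ badE i m ∧ X.src e ∉ badV i m ∧ X.trg e ∉ badV i m}
  src e := ⟨X.src e.1, e.2.2.1⟩
  trg e := ⟨X.trg e.1, e.2.2.2⟩

/-- The inclusion `K̄ ↪ X`. -/
def KbarIncl (i : K ⟶ I) (m : I ⟶ X) : Kbar i m ⟶ X where
  onV := Subtype.val
  onE := Subtype.val
  src_comm _ := rfl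
  trg_comm _ := rfl

theorem memV (i : K ⟶ I) (m : I ⟶ X) (hmV : Function.Injective m.onV) (v : K.V) :
    m.onV (i.onV v) ∉ badV i m := by
  rintro ⟨w, hw, hweq⟩
  exact hw ⟨v, hmV hweq.symm⟩

/-- The restriction `m|_K : K ⟶ K̄`. -/
def KbarRestr (i : K ⟶ I) (m : I ⟶ X)
    (hmV : Function.Injective m.onV) (hmE : Function.Injective m.onE) :
    K ⟶ Kbar i m where
  onV v := ⟨m.onV (i.onV v), memV i m hmV v⟩
  onE e := ⟨m.onE (i.onE e), by
    refine ⟨?_, ?_, ?_⟩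
    · rintro ⟨w, hw, hweq⟩
      exact hw ⟨e, hmE hweq.symm⟩
    · rw [m.src_comm, i.src_comm]
      exact memV i m hmV _
    · rw [m.trg_comm, i.trg_comm]
      exact memV i m hmV _⟩
  src_comm e := by
    apply Subtype.ext
    simp [Kbar, m.src_comm, i.src_comm]
  trg_comm e := by
    apply Subtype.ext
    simp [Kbar, m.trg_comm, i.trg_comm]

section Aux

lemma MGraph.hom_congrV {G H : MGraph} {f g : G ⟶ H} (h : f = g) (v : G.V) :
    f.onV v = g.onV v := by rw [h]

lemma MGraph.hom_congrE {G H : MGraph} {f g : G ⟶ H} (h : f = g) (e : G.E) :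
    f.onE e = g.onE e := by rw [h]

@[simp] lemma MGraph.comp_onV {G H J : MGraph} (f : G ⟶ H) (g : H ⟶ J) (v : G.V) :
    (f ≫ g).onV v = g.onV (f.onV v) := rfl

@[simp] lemma MGraph.comp_onE {G H J : MGraph} (f : G ⟶ H) (g : H ⟶ J) (e : G.E) :
    (f ≫ g).onE e = g.onE (f.onE e) := rfl

/-- Elementwise criterion for pullbacks in `MGraph`. -/
lemma MGraph.isPullback_of_elem {P A B C : MGraph}
    (fa : P ⟶ A) (fb : P ⟶ B) (ha : A ⟶ C) (hb : B ⟶ C)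
    (comm : fa ≫ ha = fb ≫ hb)
    (injV : ∀ p q : P.V, fa.onV p = fa.onV q → fb.onV p = fb.onV q → p = q)
    (surjV : ∀ (u : A.V) (v : B.V), ha.onV u = hb.onV v →
      ∃ p, fa.onV p = u ∧ fb.onV p = v)
    (injE : ∀ p q : P.E, fa.onE p = fa.onE q → fb.onE p = fb.onE q → p = q)
    (surjE : ∀ (u : A.E) (v : B.E), ha.onE u = hb.onE v →
      ∃ p, fa.onE p = u ∧ fb.onE p = v) :
    CategoryTheory.IsPullback fa fb ha hb := by
  refine CategoryTheory.IsPullback.of_isLimit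
    (CategoryTheory.Limits.PullbackCone.IsLimit.mk comm
      (fun s => ?_) (fun s => ?_) (fun s => ?_) (fun s l hl1 hl2 => ?_))
  · -- lift
    refine ⟨fun q => (surjV (s.fst.onV q) (s.snd.onV q)
        (MGraph.hom_congrV s.condition q)).choose,
      fun e => (surjE (s.fst.onE e) (s.snd.onE e)
        (MGraph.hom_congrE s.condition e)).choose, ?_, ?_⟩
    · intro e
      apply injV
      · beta_reduce
        rw [← fa.src_comm,
          (surjE (s.fst.onE e) (s.snd.onE e) (MGraph.hom_congrE s.condition e)).choose_spec.1,
          s.fst.src_comm,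
          (surjV (s.fst.onV (s.pt.src e)) (s.snd.onV (s.pt.src e))
            (MGraph.hom_congrV s.condition _)).choose_spec.1]
      · beta_reduce
        rw [← fb.src_comm,
          (surjE (s.fst.onE e) (s.snd.onE e) (MGraph.hom_congrE s.condition e)).choose_spec.2,
          s.snd.src_comm,
          (surjV (s.fst.onV (s.pt.src e)) (s.snd.onV (s.pt.src e))
            (MGraph.hom_congrV s.condition _)).choose_spec.2]
    · intro e
      apply injV
      · beta_reduce
        rw [← fa.trg_comm,
          (surjE (s.fst.onE e) (s.snd.onE e) (MGraph.hom_congrE s.condition e)).choose_spec.1,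
          s.fst.trg_comm,
          (surjV (s.fst.onV (s.pt.trg e)) (s.snd.onV (s.pt.trg e))
            (MGraph.hom_congrV s.condition _)).choose_spec.1]
      · beta_reduce
        rw [← fb.trg_comm,
          (surjE (s.fst.onE e) (s.snd.onE e) (MGraph.hom_congrE s.condition e)).choose_spec.2,
          s.snd.trg_comm,
          (surjV (s.fst.onV (s.pt.trg e)) (s.snd.onV (s.pt.trg e))
            (MGraph.hom_congrV s.condition _)).choose_spec.2]
  · -- fac_left
    apply MGraphHom.ext
    · funext q
      exact (surjV (s.fst.onV q) (s.snd.onV q) (MGraph.hom_congrV s.condition q)).choose_spec.1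
    · funext e
      exact (surjE (s.fst.onE e) (s.snd.onE e) (MGraph.hom_congrE s.condition e)).choose_spec.1
  · -- fac_right
    apply MGraphHom.ext
    · funext q
      exact (surjV (s.fst.onV q) (s.snd.onV q) (MGraph.hom_congrV s.condition q)).choose_spec.2
    · funext e
      exact (surjE (s.fst.onE e) (s.snd.onE e) (MGraph.hom_congrE s.condition e)).choose_spec.2
  · -- uniq
    apply MGraphHom.ext
    · funext q
      apply injV
      · rw [(surjV (s.fst.onV q) (s.snd.onV q) (MGraph.hom_congrV s.condition q)).choose_spec.1]
        exact MGraph.hom_congrV hl1 q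
      · rw [(surjV (s.fst.onV q) (s.snd.onV q) (MGraph.hom_congrV s.condition q)).choose_spec.2]
        exact MGraph.hom_congrV hl2 q
    · funext e
      apply injE
      · rw [(surjE (s.fst.onE e) (s.snd.onE e) (MGraph.hom_congrE s.condition e)).choose_spec.1]
        exact MGraph.hom_congrE hl1 e
      · rw [(surjE (s.fst.onE e) (s.snd.onE e) (MGraph.hom_congrE s.condition e)).choose_spec.2]
        exact MGraph.hom_congrE hl2 e

/-- The one-vertex, no-edge graph. -/
def MGraph.one : MGraph := ⟨PUnit, PEmpty, fun e => e.elim, fun e => e.elim⟩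

/-- The single-edge graph. -/
def MGraph.two : MGraph := ⟨Bool, PUnit, fun _ => false, fun _ => true⟩

/-- A pullback square in `MGraph` is elementwise surjective on vertex fibers. -/
lemma MGraph.pb_surjV {P A B C : MGraph}
    {fa : P ⟶ A} {fb : P ⟶ B} {ha : A ⟶ C} {hb : B ⟶ C}
    (h : CategoryTheory.IsPullback fa fb ha hb) (u : A.V) (v : B.V)
    (huv : ha.onV u = hb.onV v) : ∃ p, fa.onV p = u ∧ fb.onV p = v := by
  let tA : MGraph.one ⟶ A := ⟨fun _ => u, fun e => e.elim, fun e => e.elim, fun e => e.elim⟩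
  let tB : MGraph.one ⟶ B := ⟨fun _ => v, fun e => e.elim, fun e => e.elim, fun e => e.elim⟩
  have hcomm : tA ≫ ha = tB ≫ hb := by
    apply MGraphHom.ext
    · funext q; exact huv
    · funext e; exact e.elim
  refine ⟨(h.lift tA tB hcomm).onV PUnit.unit, ?_, ?_⟩
  · exact MGraph.hom_congrV (h.lift_fst tA tB hcomm) PUnit.unit
  · exact MGraph.hom_congrV (h.lift_snd tA tB hcomm) PUnit.unit

/-- A pullback square in `MGraph` is elementwise surjective on edge fibers. -/
lemma MGraph.pb_surjE {P A B C : MGraph}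
    {fa : P ⟶ A} {fb : P ⟶ B} {ha : A ⟶ C} {hb : B ⟶ C}
    (h : CategoryTheory.IsPullback fa fb ha hb) (u : A.E) (v : B.E)
    (huv : ha.onE u = hb.onE v) : ∃ p, fa.onE p = u ∧ fb.onE p = v := by
  let tA : MGraph.two ⟶ A :=
    ⟨fun b => bif b then A.trg u else A.src u, fun _ => u, fun _ => rfl, fun _ => rfl⟩
  let tB : MGraph.two ⟶ B :=
    ⟨fun b => bif b then B.trg v else B.src v, fun _ => v, fun _ => rfl, fun _ => rfl⟩
  have hcomm : tA ≫ ha = tB ≫ hb := by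
    apply MGraphHom.ext
    · funext b
      cases b
      · show ha.onV (A.src u) = hb.onV (B.src v)
        rw [← ha.src_comm, ← hb.src_comm, huv]
      · show ha.onV (A.trg u) = hb.onV (B.trg v)
        rw [← ha.trg_comm, ← hb.trg_comm, huv]
    · funext e; exact huv
  refine ⟨(h.lift tA tB hcomm).onE PUnit.unit, ?_, ?_⟩
  · exact MGraph.hom_congrE (h.lift_fst tA tB hcomm) PUnit.unit
  · exact MGraph.hom_congrE (h.lift_snd tA tB hcomm) PUnit.unit

end Aux

/-- In the category of finite directed multigraphs, given composable injective
morphisms `i : K ⟶ I` and `m : I ⟶ X`, the final pullback complement of `(m, i)`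
exists, given by the restriction `m|_K : K ⟶ K̄` and the inclusion `K̄ ↪ X`. -/
theorem stmt_12 (i : K ⟶ I) (m : I ⟶ X)
    [Finite K.V] [Finite K.E] [Finite I.V] [Finite I.E] [Finite X.V] [Finite X.E]
    (hiV : Function.Injective i.onV) (hiE : Function.Injective i.onE)
    (hmV : Function.Injective m.onV) (hmE : Function.Injective m.onE) :
    IsFPC i (KbarRestr i m hmV hmE) m (KbarIncl i m) := by
  constructor
  · -- the pullback square
    refine MGraph.isPullback_of_elem _ _ _ _ ?_ ?_ ?_ ?_ ?_
    · apply MGraphHom.ext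
      · funext v; rfl
      · funext e; rfl
    · intro p q h1 _
      exact hiV h1
    · rintro u ⟨v, hv⟩ huv
      have hu : u ∈ Set.range i.onV := by
        by_contra hu
        exact hv ⟨u, hu, huv⟩
      obtain ⟨k, hk⟩ := hu
      refine ⟨k, hk, ?_⟩
      apply Subtype.ext
      show m.onV (i.onV k) = v
      rw [hk, huv]; rfl
    · intro p q h1 _
      exact hiE h1
    · rintro u ⟨v, hv, _, _⟩ huv
      have hu : u ∈ Set.range i.onE := by
        by_contra hu
        exact hv ⟨u, hu, huv⟩
      obtain ⟨k, hk⟩ := hu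
      refine ⟨k, hk, ?_⟩
      apply Subtype.ext
      show m.onE (i.onE k) = v
      rw [hk, huv]; rfl
  · -- universal property
    intro Q L x y z w hpb hwx
    have hgoodV : ∀ v : L.V, z.onV v ∉ badV i m := by
      rintro v ⟨u, hu, huv⟩
      obtain ⟨q, hq1, hq2⟩ := MGraph.pb_surjV hpb u v huv
      refine hu ⟨w.onV q, ?_⟩
      rw [← hq1, ← hwx]; rfl
    have hgoodE : ∀ e : L.E, z.onE e ∉ badE i m := by
      rintro e ⟨u, hu, hue⟩
      obtain ⟨q, hq1, hq2⟩ := MGraph.pb_surjE hpb u e hue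
      refine hu ⟨w.onE q, ?_⟩
      rw [← hq1, ← hwx]; rfl
    refine ⟨⟨fun v => ⟨z.onV v, hgoodV v⟩,
      fun e => ⟨z.onE e, hgoodE e, by rw [z.src_comm]; exact hgoodV _,
        by rw [z.trg_comm]; exact hgoodV _⟩, ?_, ?_⟩, ⟨?_, ?_⟩, ?_⟩
    · intro e
      apply Subtype.ext
      exact z.src_comm e
    · intro e
      apply Subtype.ext
      exact z.trg_comm e
    · apply MGraphHom.ext
      · funext v; rfl
      · funext e; rfl
    · apply MGraphHom.ext
      · funext q
        apply Subtype.ext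
        show z.onV (y.onV q) = m.onV (i.onV (w.onV q))
        have h1 : m.onV (x.onV q) = z.onV (y.onV q) := MGraph.hom_congrV hpb.w q
        have h2 : i.onV (w.onV q) = x.onV q := MGraph.hom_congrV hwx q
        rw [h2]; exact h1.symm
      · funext q
        apply Subtype.ext
        show z.onE (y.onE q) = m.onE (i.onE (w.onE q))
        have h1 : m.onE (x.onE q) = z.onE (y.onE q) := MGraph.hom_congrE hpb.w q
        have h2 : i.onE (w.onE q) = x.onE q := MGraph.hom_congrE hwx q
        rw [h2]; exact h1.symm
    · rintro w' ⟨hw1, _⟩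
      apply MGraphHom.ext
      · funext v
        apply Subtype.ext
        exact MGraph.hom_congrV hw1 v
      · funext e
        apply Subtype.ext
        exact MGraph.hom_congrE hw1 e
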